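/- arXiv:2602.11493 — 3 statements merged into one kernel-verified Lean document; each statement's English description precedes it below -/
import Mathlib

section
/- Let A ∈ ℍ^{n×n×n₃} be a third-order quaternion tensor with conjugate transpose A*, and let Â and (A*)^ denote the mode-3 quaternion DFTs of A and A*, respectively. Then diag((A*)^) = (diag(Â))*, where on the right * denotes the conjugate transpose of a quaternion matrix. -/
open Matrix Kronecker

noncomputable section

/-- The real quaternions. -/
abbrev Quat := Quaternion ℝ

/-- The embedding of `ℂ` into the quaternions (via `1` and `i`). -/
def c2q (z : ℂ) : Quat := ⟨z.re, z.im, 0, 0⟩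

/-- The quaternion imaginary unit `j`. -/
def jH : Quat := ⟨0, 0, 1, 0⟩

/-- The first complex component of a quaternion: `q = c2q (qd q) + jH * c2q (qc q)`. -/
def qd (q : Quat) : ℂ := ⟨q.re, q.imI⟩

/-- The second complex component of a quaternion. -/
def qc (q : Quat) : ℂ := ⟨q.imJ, -q.imK⟩

/-- A third-order tensor, given by its family of frontal slices. -/
abbrev Tensor (α : Type*) (n₁ n₂ n₃ : ℕ) := Fin n₃ → Matrix (Fin n₁) (Fin n₂) α

/-- The complex tensor `A_d` in the decomposition `A = A_d + j·A_c`. -/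
def Td {n₁ n₂ n₃ : ℕ} (A : Tensor Quat n₁ n₂ n₃) : Tensor ℂ n₁ n₂ n₃ :=
  fun k i j => qd (A k i j)

/-- The complex tensor `A_c` in the decomposition `A = A_d + j·A_c`. -/
def Tc {n₁ n₂ n₃ : ℕ} (A : Tensor Quat n₁ n₂ n₃) : Tensor ℂ n₁ n₂ n₃ :=
  fun k i j => qc (A k i j)

/-- The normalized `n × n` DFT matrix (0-indexed). -/
def Fmat (n : ℕ) : Matrix (Fin n) (Fin n) ℂ :=
  fun s t => (((Real.sqrt (n : ℝ)) : ℂ))⁻¹ *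
    Complex.exp ((-2 * (Real.pi : ℂ) * Complex.I * ((s : ℕ) : ℂ) * ((t : ℕ) : ℂ)) / (n : ℂ))

/-- The flip permutation matrix `P_n` (0-indexed: `P_{s,t} = 1` iff `s + t ≡ 0 (mod n)`). -/
def Pmat (n : ℕ) : Matrix (Fin n) (Fin n) ℂ :=
  fun s t => if ((s : ℕ) + (t : ℕ)) % n = 0 then 1 else 0

/-- Left scalar multiplication of a quaternion matrix by a quaternion. -/
def lsmul {m n : Type*} (q : Quat) (M : Matrix m n Quat) : Matrix m n Quat :=
  fun i j => q * M i j

/-- Right scalar multiplication of a quaternion matrix by a quaternion. -/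
def rsmul {m n : Type*} (q : Quat) (M : Matrix m n Quat) : Matrix m n Quat :=
  fun i j => M i j * q

/-- The block circulant matrix of a third-order tensor. -/
def bcirc {α : Type*} {n₁ n₂ n₃ : ℕ} (T : Tensor α n₁ n₂ n₃) :
    Matrix (Fin n₃ × Fin n₁) (Fin n₃ × Fin n₂) α :=
  fun p q => T (p.1 - q.1) p.2 q.2

/-- The z-block circulant matrix `bcirc_z(A) = bcirc(A_d) + j·bcirc(A_c)·(P_{n₃} ⊗ I_{n₂})`. -/
def bcircz {n₁ n₂ n₃ : ℕ} (A : Tensor Quat n₁ n₂ n₃) :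
    Matrix (Fin n₃ × Fin n₁) (Fin n₃ × Fin n₂) Quat :=
  (bcirc (Td A)).map c2q +
    lsmul jH ((bcirc (Tc A) * (Pmat n₃ ⊗ₖ (1 : Matrix (Fin n₂) (Fin n₂) ℂ))).map c2q)

/-- `unfold`: stack the frontal slices vertically. -/
def unfoldT {α : Type*} {n₁ n₂ n₃ : ℕ} (T : Tensor α n₁ n₂ n₃) :
    Matrix (Fin n₃ × Fin n₁) (Fin n₂) α :=
  fun p j => T p.1 p.2 j

/-- `fold`: the inverse of `unfold`. -/
def foldT {α : Type*} {n₁ n₂ n₃ : ℕ} (M : Matrix (Fin n₃ × Fin n₁) (Fin n₂) α) :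
    Tensor α n₁ n₂ n₃ :=
  fun k i j => M (k, i) j

/-- The QT-product `A *_Q B = fold(bcirc_z(A)·unfold(B))`. -/
def qtmul {n₁ r n₂ n₃ : ℕ} (A : Tensor Quat n₁ r n₃) (B : Tensor Quat r n₂ n₃) :
    Tensor Quat n₁ n₂ n₃ :=
  foldT (bcircz A * unfoldT B)

/-- The mode-3 quaternion DFT
`Â(i,j,:) = √n₃·F_{n₃}·A_d(i,j,:) + j·√n₃·P_{n₃}·F_{n₃}·A_c(i,j,:)`, tube-wise. -/
def hatT {n₁ n₂ n₃ : ℕ} (A : Tensor Quat n₁ n₂ n₃) : Tensor Quat n₁ n₂ n₃ :=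
  fun k i j =>
    c2q (((Real.sqrt (n₃ : ℝ)) : ℂ) * ∑ t, Fmat n₃ k t * Td A t i j) +
    jH * c2q (((Real.sqrt (n₃ : ℝ)) : ℂ) * ∑ t, (Pmat n₃ * Fmat n₃) k t * Tc A t i j)

/-- `diag(Â)`: the block diagonal matrix with the frontal slices as diagonal blocks. -/
def blkDiag {α : Type*} [Zero α] {n₁ n₂ n₃ : ℕ} (T : Tensor α n₁ n₂ n₃) :
    Matrix (Fin n₃ × Fin n₁) (Fin n₃ × Fin n₂) α :=
  fun p q => if p.1 = q.1 then T p.1 p.2 q.2 else 0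

/-- Conjugate transpose of a complex tensor: conjugate-transpose each slice and
reverse the order of slices `2,…,n₃` (i.e. slice `k ↦ -k` in 0-indexing). -/
def cConjT {n₁ n₂ n₃ : ℕ} (T : Tensor ℂ n₁ n₂ n₃) : Tensor ℂ n₂ n₁ n₃ :=
  fun k => (T (-k))ᴴ

/-- Conjugate transpose of a quaternion tensor, defined by
`unfold(A*) = unfold(A_d*) − (P_{n₃} ⊗ I_{n₂})·unfold(A_c*)·j`. -/
def tConjT {n₁ n₂ n₃ : ℕ} (A : Tensor Quat n₁ n₂ n₃) : Tensor Quat n₂ n₁ n₃ :=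
  foldT ((unfoldT (cConjT (Td A))).map c2q -
    rsmul jH (((Pmat n₃ ⊗ₖ (1 : Matrix (Fin n₂) (Fin n₂) ℂ)) *
      unfoldT (cConjT (Tc A))).map c2q))

/-- The identity tensor: identity matrix as first frontal slice, zero elsewhere. -/
def idT (n n₃ : ℕ) : Tensor Quat n n n₃ :=
  fun k => if (k : ℕ) = 0 then (1 : Matrix (Fin n) (Fin n) Quat) else 0

/-- A quaternion tensor is unitary if `U* *_Q U = U *_Q U* = I`. -/
def IsUnitaryT {n n₃ : ℕ} (U : Tensor Quat n n n₃) : Prop :=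
  qtmul (tConjT U) U = idT n n₃ ∧ qtmul U (tConjT U) = idT n n₃

/-- A quaternion tensor is Hermitian if `H* = H`. -/
def IsHermitianT {n n₃ : ℕ} (H : Tensor Quat n n n₃) : Prop := tConjT H = H

/-- A quaternion matrix `M` is positive semidefinite if `x*·M·x` is a nonnegative
real number for every quaternion vector `x`. -/
def IsPSDMat {m : Type*} [Fintype m] (M : Matrix m m Quat) : Prop :=
  ∀ x : m → Quat, ∃ r : ℝ, 0 ≤ r ∧ (star x) ⬝ᵥ M.mulVec x = (r : Quat)


section Aux

lemma qd_form (a b : ℂ) : qd (c2q a - c2q b * jH) = a := by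
  apply Complex.ext <;> simp [qd, Quaternion.re_mul, Quaternion.imI_mul, Quaternion.imJ_mul, Quaternion.imK_mul] <;> simp [c2q, jH]

lemma qc_form (a b : ℂ) : qc (c2q a - c2q b * jH) = -(starRingEnd ℂ) b := by
  apply Complex.ext <;> simp [qc, Quaternion.re_mul, Quaternion.imI_mul, Quaternion.imJ_mul, Quaternion.imK_mul] <;> simp [c2q, jH]

lemma star_form (X Y : ℂ) :
    star (c2q X + jH * c2q Y) = c2q ((starRingEnd ℂ) X) + jH * c2q (-Y) := by
  ext <;> simp [Quaternion.re_mul, Quaternion.imI_mul, Quaternion.imJ_mul, Quaternion.imK_mul] <;> simp [c2q, jH]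

lemma Pmat_eq {n : ℕ} (t u : Fin n) : Pmat n t u = if u = -t then 1 else 0 := by
  haveI : NeZero n := ⟨t.pos.ne'⟩
  have h : (((t:ℕ) + (u:ℕ)) % n = 0) ↔ (u = -t) := by
    constructor
    · intro h
      have h2 : t + u = 0 := Fin.ext (by rw [Fin.val_add, h, Fin.val_zero])
      exact eq_neg_of_add_eq_zero_right h2
    · intro h
      subst h
      rw [← Fin.val_add, add_neg_cancel, Fin.val_zero]
  unfold Pmat
  simp only [h]

lemma Fmat_neg {n : ℕ} (k s : Fin n) : Fmat n k (-s) = (starRingEnd ℂ) (Fmat n k s) := by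
  have hn : 0 < n := k.pos
  unfold Fmat
  rw [_root_.map_mul, map_inv₀, Complex.conj_ofReal, ← Complex.exp_conj]
  congr 1
  have hconj : (starRingEnd ℂ) ((-2 * (Real.pi:ℂ) * Complex.I * ((k:ℕ):ℂ) * ((s:ℕ):ℂ)) / (n:ℂ))
      = (2 * (Real.pi:ℂ) * Complex.I * ((k:ℕ):ℂ) * ((s:ℕ):ℂ)) / (n:ℂ) := by
    simp [map_div₀, Complex.conj_I, Complex.conj_ofReal, map_ofNat]
  rw [hconj]
  by_cases hs : (s : ℕ) = 0
  · have hv0 : ((-s : Fin n) : ℕ) = 0 := by rw [Fin.coe_neg, hs]; simp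
    rw [hv0, hs]
    norm_num
  · have hv : ((-s : Fin n) : ℕ) = n - (s:ℕ) := by
      rw [Fin.coe_neg, Nat.mod_eq_of_lt (by omega)]
    rw [hv]
    rw [Complex.exp_eq_exp_iff_exists_int]
    refine ⟨-(k:ℕ), ?_⟩
    have hne : (n : ℂ) ≠ 0 := Nat.cast_ne_zero.mpr hn.ne'
    have hcast : ((n - (s:ℕ) : ℕ) : ℂ) = (n:ℂ) - ((s:ℕ):ℂ) := by
      push_cast [Nat.cast_sub (le_of_lt s.is_lt)]; ring
    rw [hcast]
    field_simp
    push_cast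
    ring

lemma tConjT_apply {n₁ n₂ n₃ : ℕ} (A : Tensor Quat n₁ n₂ n₃) (t : Fin n₃) (i : Fin n₂) (j : Fin n₁) :
    tConjT A t i j =
      c2q ((starRingEnd ℂ) (Td A (-t) j i)) - c2q ((starRingEnd ℂ) (Tc A t j i)) * jH := by
  have hsum : ((Pmat n₃ ⊗ₖ (1 : Matrix (Fin n₂) (Fin n₂) ℂ)) * unfoldT (cConjT (Tc A))) (t, i) j
      = (starRingEnd ℂ) (Tc A t j i) := by
    rw [Matrix.mul_apply, Fintype.sum_prod_type]
    simp only [Matrix.kroneckerMap_apply, Matrix.one_apply, unfoldT, cConjT,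
      Matrix.conjTranspose_apply, mul_ite, mul_one, mul_zero, ite_mul, zero_mul,
      Finset.sum_ite_eq, Finset.mem_univ, if_true]
    simp only [Pmat_eq, ite_mul, one_mul, zero_mul, Finset.sum_ite_eq', Finset.mem_univ,
      if_true, neg_neg]
    rfl
  show (unfoldT (cConjT (Td A))).map c2q (t, i) j -
      (rsmul jH (((Pmat n₃ ⊗ₖ (1 : Matrix (Fin n₂) (Fin n₂) ℂ)) *
        unfoldT (cConjT (Tc A))).map c2q)) (t, i) j = _
  rw [show (rsmul jH (((Pmat n₃ ⊗ₖ (1 : Matrix (Fin n₂) (Fin n₂) ℂ)) *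
        unfoldT (cConjT (Tc A))).map c2q)) (t, i) j
      = c2q (((Pmat n₃ ⊗ₖ (1 : Matrix (Fin n₂) (Fin n₂) ℂ)) *
        unfoldT (cConjT (Tc A))) (t, i) j) * jH from rfl, hsum]
  rfl

lemma Td_tConjT {n₁ n₂ n₃ : ℕ} (A : Tensor Quat n₁ n₂ n₃) (t : Fin n₃) (i : Fin n₂) (j : Fin n₁) :
    Td (tConjT A) t i j = (starRingEnd ℂ) (Td A (-t) j i) := by
  show qd (tConjT A t i j) = _
  rw [tConjT_apply, qd_form]

lemma Tc_tConjT {n₁ n₂ n₃ : ℕ} (A : Tensor Quat n₁ n₂ n₃) (t : Fin n₃) (i : Fin n₂) (j : Fin n₁) :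
    Tc (tConjT A) t i j = -(Tc A t j i) := by
  show qc (tConjT A t i j) = _
  rw [tConjT_apply, qc_form, Complex.conj_conj]

end Aux

/-- `diag((A*)^) = (diag(Â))*`. -/
theorem stmt15 {n n₃ : ℕ} (A : Tensor Quat n n n₃) :
    blkDiag (hatT (tConjT A)) = (blkDiag (hatT A))ᴴ := by
  funext p q
  obtain ⟨k, i⟩ := p
  obtain ⟨k', j⟩ := q
  simp only [blkDiag, Matrix.conjTranspose_apply]
  by_cases hk : k = k'
  · subst hk
    simp only [if_pos rfl]
    show hatT (tConjT A) k i j = star (hatT A k j i)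
    simp only [hatT]
    rw [star_form]
    have h1 : (((Real.sqrt (n₃:ℝ)):ℂ) * ∑ t, Fmat n₃ k t * Td (tConjT A) t i j)
        = (starRingEnd ℂ) (((Real.sqrt (n₃:ℝ)):ℂ) * ∑ t, Fmat n₃ k t * Td A t j i) := by
      rw [_root_.map_mul, map_sum, Complex.conj_ofReal]
      congr 1
      calc (∑ t, Fmat n₃ k t * Td (tConjT A) t i j)
          = ∑ t, Fmat n₃ k t * (starRingEnd ℂ) (Td A (-t) j i) := by
            simp only [Td_tConjT]
        _ = ∑ t, Fmat n₃ k (-t) * (starRingEnd ℂ) (Td A (- -t) j i) := by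
            exact (Equiv.sum_comp (Equiv.neg (Fin n₃))
              (fun t => Fmat n₃ k t * (starRingEnd ℂ) (Td A (-t) j i))).symm
        _ = ∑ t, (starRingEnd ℂ) (Fmat n₃ k t * Td A t j i) := by
            simp only [neg_neg, Fmat_neg, _root_.map_mul]
    have h2 : (((Real.sqrt (n₃:ℝ)):ℂ) * ∑ t, (Pmat n₃ * Fmat n₃) k t * Tc (tConjT A) t i j)
        = -(((Real.sqrt (n₃:ℝ)):ℂ) * ∑ t, (Pmat n₃ * Fmat n₃) k t * Tc A t j i) := by
      simp only [Tc_tConjT, mul_neg, Finset.sum_neg_distrib]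
    rw [h1, h2]
  · rw [if_neg hk, if_neg (Ne.symm hk), star_zero]


end
end

section
/- Let H ∈ ℍ^{n×n×n₃} be a third-order quaternion tensor such that every frontal slice of its mode-3 quaternion DFT Ĥ is a Hermitian positive semidefinite quaternion matrix. Then the quaternion matrix bcirc_z(H) is Hermitian and positive semidefinite, i.e., y*·bcirc_z(H)·y ≥ 0 for every y ∈ ℍ^{nn₃}. -/
open Matrix Kronecker

noncomputable section

/-! ### Auxiliary lemmas -/

section Aux

/-- The exponential character `m ↦ exp(-2πi m / n)`. -/
noncomputable def eC (m : ℕ) (a : ℤ) : ℂ :=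
  Complex.exp ((-2) * (Real.pi:ℂ) * Complex.I * (a:ℂ) / (m:ℂ))

lemma eC_add (m : ℕ) (a b : ℤ) : eC m (a+b) = eC m a * eC m b := by
  rw [eC, eC, eC, ← Complex.exp_add]
  congr 1; push_cast; ring

lemma eC_zero (m : ℕ) : eC m 0 = 1 := by simp [eC]

lemma eC_mul_nat (m : ℕ) (k : ℕ) (a : ℤ) : eC m (k * a) = (eC m a) ^ k := by
  induction k with
  | zero => simp [eC_zero]
  | succ k ih => push_cast; rw [add_mul, eC_add, ih, one_mul, pow_succ]

lemma eC_nat_dvd (m : ℕ) (hm : m ≠ 0) (q : ℤ) : eC m (m * q) = 1 := by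
  rw [eC]
  have hne : (m:ℂ) ≠ 0 := Nat.cast_ne_zero.mpr hm
  have : (-2) * (Real.pi:ℂ) * Complex.I * ((m*q : ℤ):ℂ) / (m:ℂ)
      = (-q : ℤ) * (2 * Real.pi * Complex.I) := by
    push_cast; field_simp
  rw [this, Complex.exp_int_mul_two_pi_mul_I]

lemma eC_congr {m : ℕ} (hm : m ≠ 0) {a b : ℤ} (h : (m:ℤ) ∣ a - b) : eC m a = eC m b := by
  obtain ⟨q, hq⟩ := h
  have : a = b + m * q := by linarith
  rw [this, eC_add, eC_nat_dvd m hm, mul_one]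

lemma conj_eC (m : ℕ) (a : ℤ) : (starRingEnd ℂ) (eC m a) = eC m (-a) := by
  rw [eC, eC, ← Complex.exp_conj]
  congr 1
  simp only [map_div₀, _root_.map_mul, Complex.conj_I, Complex.conj_natCast,
    map_neg, map_ofNat, Complex.conj_ofReal, map_intCast]
  push_cast; ring

lemma eC_ne_one {m : ℕ} (hm : m ≠ 0) {a : ℤ} (h : ¬ (m:ℤ) ∣ a) : eC m a ≠ 1 := by
  intro he
  rw [eC, Complex.exp_eq_one_iff] at he
  obtain ⟨q, hq⟩ := he
  have hne : (m:ℂ) ≠ 0 := Nat.cast_ne_zero.mpr hm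
  have hpi : (Real.pi:ℂ) ≠ 0 := by exact_mod_cast Real.pi_ne_zero
  rw [div_eq_iff hne] at hq
  have key : (2 * (Real.pi:ℂ) * Complex.I) * (a : ℂ)
      = (2 * (Real.pi:ℂ) * Complex.I) * ((-q*m : ℤ):ℂ) := by
    push_cast; linear_combination -hq
  have h2 : (2 * (Real.pi:ℂ) * Complex.I) ≠ 0 := by
    simp [Complex.I_ne_zero, hpi]
  have hma : (a:ℂ) = ((-q*m:ℤ):ℂ) := mul_left_cancel₀ h2 key
  have : a = -q*m := by exact_mod_cast hma
  exact h ⟨-q, by linarith⟩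

lemma sum_eC (m : ℕ) (a : ℤ) :
    (∑ k : Fin m, eC m (k * a)) = if (m:ℤ) ∣ a then (m:ℂ) else 0 := by
  rcases Nat.eq_zero_or_pos m with hm | hm
  · subst hm; simp
  have hm' : m ≠ 0 := hm.ne'
  have h0 : (∑ k : Fin m, eC m (k * a)) = ∑ k : Fin m, (eC m a) ^ (k:ℕ) := by
    apply Finset.sum_congr rfl
    intro k _
    rw [← eC_mul_nat]
  rw [h0, Fin.sum_univ_eq_sum_range]
  by_cases hd : (m:ℤ) ∣ a
  · obtain ⟨q, hq⟩ := hd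
    have h1 : eC m a = 1 := by rw [hq, eC_nat_dvd m hm']
    rw [if_pos ⟨q, hq⟩]
    simp [h1, hm]
  · rw [if_neg hd]
    have h1 : eC m a ≠ 1 := eC_ne_one hm' hd
    rw [geom_sum_eq h1]
    have h2 : eC m a ^ m = 1 := by
      rw [← eC_mul_nat, eC_nat_dvd m hm']
    simp [h2]

/-! quaternion-complex interplay -/

noncomputable def c2qRH : ℂ →+* Quat where
  toFun := c2q
  map_one' := by ext <;> simp [c2q] <;> rfl
  map_mul' z w := by ext <;> simp only [Quaternion.re_mul, Quaternion.imI_mul, Quaternion.imJ_mul, Quaternion.imK_mul] <;> simp [c2q, Complex.mul_re, Complex.mul_im]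
  map_zero' := by ext <;> simp [c2q] <;> rfl
  map_add' z w := by ext <;> simp only [Quaternion.re_add, Quaternion.imI_add, Quaternion.imJ_add, Quaternion.imK_add] <;> simp [c2q]

lemma c2q_mul (z w : ℂ) : c2q (z * w) = c2q z * c2q w := _root_.map_mul c2qRH z w

lemma c2q_sum {ι : Type*} (s : Finset ι) (f : ι → ℂ) :
    c2q (∑ x ∈ s, f x) = ∑ x ∈ s, c2q (f x) := map_sum c2qRH f s

lemma star_c2q (z : ℂ) : star (c2q z) = c2q ((starRingEnd ℂ) z) := by
  ext <;> simp only [Quaternion.re_star, Quaternion.imI_star, Quaternion.imJ_star, Quaternion.imK_star] <;> simp [c2q]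

lemma jH_mul_c2q (z : ℂ) : jH * c2q z = c2q ((starRingEnd ℂ) z) * jH := by
  ext <;> simp only [Quaternion.re_mul, Quaternion.imI_mul, Quaternion.imJ_mul, Quaternion.imK_mul] <;> simp [c2q, jH]

lemma c2q_mul_jH (z : ℂ) : c2q z * jH = jH * c2q ((starRingEnd ℂ) z) := by
  ext <;> simp only [Quaternion.re_mul, Quaternion.imI_mul, Quaternion.imJ_mul, Quaternion.imK_mul] <;> simp [c2q, jH]

lemma star_jH : star jH = -jH := by ext <;> simp only [Quaternion.re_star, Quaternion.imI_star, Quaternion.imJ_star, Quaternion.imK_star, Quaternion.re_neg, Quaternion.imI_neg, Quaternion.imJ_neg, Quaternion.imK_neg] <;> simp [jH]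

lemma natCast_c2q (m : ℕ) : (m : Quat) = c2q (m : ℂ) := by
  ext <;> simp [c2q]

lemma real_c2q (r : ℝ) : (r : Quat) = c2q (r : ℂ) := by
  ext <;> simp [c2q]

/-! Fin arithmetic vs divisibility -/

lemma fin_add_coe {m : ℕ} (a b : Fin m) :
    (m:ℤ) ∣ (((a+b : Fin m) : ℕ) : ℤ) - ((a:ℕ) + (b:ℕ) : ℤ) := by
  have h := Nat.mod_add_div ((a:ℕ) + (b:ℕ)) m
  have hZ : ((((a:ℕ) + (b:ℕ)) % m : ℕ) : ℤ) + (m:ℤ) * ((((a:ℕ)+(b:ℕ))/m : ℕ):ℤ)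
      = ((a:ℕ):ℤ) + ((b:ℕ):ℤ) := by exact_mod_cast h
  refine ⟨-((((a:ℕ)+(b:ℕ))/m : ℕ):ℤ), ?_⟩
  have hv : ((a+b : Fin m) : ℕ) = ((a:ℕ) + (b:ℕ)) % m := by
    simp [Fin.add_def]
  rw [hv]
  linarith

lemma fin_eq_iff {m : ℕ} (a b : Fin m) :
    a = b ↔ (m:ℤ) ∣ ((a:ℕ):ℤ) - ((b:ℕ):ℤ) := by
  constructor
  · rintro rfl; simp
  · rintro ⟨q, hq⟩
    have h1 : ((a:ℕ):ℤ) < m := by exact_mod_cast a.isLt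
    have h2 : ((b:ℕ):ℤ) < m := by exact_mod_cast b.isLt
    have h3 : (0:ℤ) ≤ (a:ℕ) := by positivity
    have h4 : (0:ℤ) ≤ (b:ℕ) := by positivity
    have hq0 : q = 0 := by
      rcases lt_trichotomy q 0 with h | h | h
      · nlinarith [mul_le_mul_of_nonneg_left (show q ≤ -1 by omega)
          (show (0:ℤ) ≤ m by positivity)]
      · exact h
      · nlinarith [mul_le_mul_of_nonneg_left (show 1 ≤ q by omega)
          (show (0:ℤ) ≤ m by positivity)]
    rw [hq0, mul_zero, sub_eq_zero] at hq
    exact Fin.ext (by exact_mod_cast hq)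

lemma fin_neg_coe {m : ℕ} (a : Fin m) :
    (m:ℤ) ∣ (((-a : Fin m) : ℕ) : ℤ) - (-((a:ℕ):ℤ)) := by
  haveI : NeZero m := ⟨a.pos.ne'⟩
  have h1 := fin_add_coe (-a) a
  rw [neg_add_cancel] at h1
  have h2 : ((((0:Fin m)):ℕ):ℤ) = 0 := by simp
  rw [h2] at h1
  have := (dvd_neg).mpr h1
  convert this using 1; rfl; ring

lemma fin_sub_coe {m : ℕ} (a b : Fin m) :
    (m:ℤ) ∣ (((a - b : Fin m) : ℕ) : ℤ) - (((a:ℕ):ℤ) - ((b:ℕ):ℤ)) := by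
  haveI : NeZero m := ⟨a.pos.ne'⟩
  have h1 := fin_add_coe (a - b) b
  rw [sub_add_cancel] at h1
  have := (dvd_neg).mpr h1
  convert this using 1; rfl; ring

lemma dvd_iff_dvd {m a b : ℤ} (h : m ∣ a - b) : m ∣ a ↔ m ∣ b :=
  ⟨fun h' => by simpa using dvd_sub h' h, fun h' => by simpa using dvd_add h h'⟩

/-! entries of the structured matrices -/

lemma Pmat_apply {m : ℕ} (u t : Fin m) :
    Pmat m u t = if u = -t then 1 else 0 := by
  haveI : NeZero m := ⟨u.pos.ne'⟩
  have hcond : (((u:ℕ) + (t:ℕ)) % m = 0) ↔ (u = -t) := by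
    rw [fin_eq_iff]
    have hd : (m:ℤ) ∣ (((u:ℕ):ℤ) - (((-t : Fin m):ℕ):ℤ)) - (((u:ℕ):ℤ) + ((t:ℕ):ℤ)) := by
      have := (dvd_neg).mpr (fin_neg_coe t)
      convert this using 1; rfl; ring
    rw [dvd_iff_dvd hd]
    rw [← Nat.cast_add, Int.natCast_dvd_natCast]
    exact (Nat.dvd_iff_mod_eq_zero).symm
  rw [Pmat]
  by_cases hc : u = -t
  · rw [if_pos (hcond.mpr hc), if_pos hc]
  · rw [if_neg (fun hh => hc (hcond.mp hh)), if_neg hc]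

end Aux
section Aux2

lemma bcircz_apply {n n₃ : ℕ} (H : Tensor Quat n n n₃) (s t : Fin n₃) (i j : Fin n) :
    bcircz H (s,i) (t,j) = c2q (qd (H (s-t) i j)) + jH * c2q (qc (H (s+t) i j)) := by
  haveI : NeZero n₃ := ⟨s.pos.ne'⟩
  simp only [bcircz, Matrix.add_apply, Matrix.map_apply, lsmul, bcirc, Td, Tc,
    Matrix.mul_apply, Matrix.kroneckerMap_apply, Matrix.one_apply]
  congr 2
  rw [Fintype.sum_prod_type]
  have hinner : ∀ u : Fin n₃,
      (∑ v : Fin n, qc (H (s - u) i v) * (Pmat n₃ u t * if v = j then 1 else 0))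
        = (if u = -t then qc (H (s - u) i j) else 0) := by
    intro u
    rw [Pmat_apply]
    by_cases hu : u = -t
    · simp [hu]
    · simp [hu]
  rw [Finset.sum_congr rfl (fun u _ => hinner u)]
  rw [Finset.sum_ite_eq' Finset.univ (-t) (fun u => qc (H (s - u) i j))]
  simp [sub_neg_eq_add]

lemma sqrtF {n₃ : ℕ} (k u : Fin n₃) :
    ((Real.sqrt (n₃:ℝ) : ℝ) : ℂ) * Fmat n₃ k u = eC n₃ ((k:ℕ) * (u:ℕ)) := by
  have hpos : 0 < n₃ := k.pos
  have hs : ((Real.sqrt (n₃:ℝ) : ℝ) : ℂ) ≠ 0 := by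
    simp only [ne_eq, Complex.ofReal_eq_zero]
    positivity
  rw [Fmat, ← mul_assoc, mul_inv_cancel₀ hs, one_mul, eC]
  congr 1
  push_cast
  ring

lemma hatT_apply {n n₃ : ℕ} (H : Tensor Quat n n n₃) (k : Fin n₃) (i j : Fin n) :
    hatT H k i j
      = c2q (∑ u : Fin n₃, eC n₃ ((k:ℕ) * (u:ℕ)) * Td H u i j)
        + jH * c2q (∑ u : Fin n₃, eC n₃ (-((k:ℕ) * (u:ℕ))) * Tc H u i j) := by
  haveI : NeZero n₃ := ⟨k.pos.ne'⟩
  have hPF : ∀ u : Fin n₃, (Pmat n₃ * Fmat n₃) k u = Fmat n₃ (-k) u := by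
    intro u
    rw [Matrix.mul_apply]
    have hterm : ∀ v : Fin n₃, Pmat n₃ k v * Fmat n₃ v u
        = if v = -k then Fmat n₃ v u else 0 := by
      intro v
      rw [Pmat_apply]
      by_cases hv : v = -k
      · have hkv : k = -v := by rw [hv, neg_neg]
        rw [if_pos hkv, if_pos hv, one_mul]
      · have hkv : ¬ (k = -v) := by
          intro hh; apply hv; rw [hh, neg_neg]
        rw [if_neg hkv, if_neg hv, zero_mul]
    rw [Finset.sum_congr rfl (fun v _ => hterm v)]
    exact (Finset.sum_ite_eq' Finset.univ (-k) (fun v => Fmat n₃ v u)).trans (by simp)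
  have hF2 : ∀ u : Fin n₃,
      ((Real.sqrt (n₃:ℝ) : ℝ) : ℂ) * Fmat n₃ (-k) u = eC n₃ (-((k:ℕ) * (u:ℕ))) := by
    intro u
    rw [sqrtF]
    apply eC_congr k.pos.ne'
    have hd := fin_neg_coe k
    have : ((((-k : Fin n₃):ℕ):ℤ) * ((u:ℕ):ℤ)) - (-(((k:ℕ):ℤ) * ((u:ℕ):ℤ)))
        = ((((-k : Fin n₃):ℕ):ℤ) - (-((k:ℕ):ℤ))) * ((u:ℕ):ℤ) := by ring
    rw [this]
    exact hd.mul_right _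
  rw [hatT]
  have h1 : ((Real.sqrt (n₃:ℝ) : ℝ) : ℂ) * ∑ u : Fin n₃, Fmat n₃ k u * Td H u i j
      = ∑ u : Fin n₃, eC n₃ ((k:ℕ) * (u:ℕ)) * Td H u i j := by
    rw [Finset.mul_sum]
    refine Finset.sum_congr rfl fun u _ => ?_
    rw [← mul_assoc, sqrtF]
  have h2 : ((Real.sqrt (n₃:ℝ) : ℝ) : ℂ) * ∑ u : Fin n₃, (Pmat n₃ * Fmat n₃) k u * Tc H u i j
      = ∑ u : Fin n₃, eC n₃ (-((k:ℕ) * (u:ℕ))) * Tc H u i j := by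
    rw [Finset.mul_sum]
    refine Finset.sum_congr rfl fun u _ => ?_
    rw [← mul_assoc, hPF, hF2]
  rw [h1, h2]

end Aux2
section Aux3

lemma key_bcircz {n n₃ : ℕ} (H : Tensor Quat n n n₃) (s t : Fin n₃) (i j : Fin n) :
    (n₃ : Quat) * bcircz H (s,i) (t,j)
      = ∑ k : Fin n₃, c2q (eC n₃ (-((k:ℕ) * (s:ℕ)))) * hatT H k i j
          * c2q (eC n₃ ((k:ℕ)*(t:ℕ))) := by
  haveI : NeZero n₃ := ⟨s.pos.ne'⟩
  have hterm : ∀ k : Fin n₃,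
      c2q (eC n₃ (-((k:ℕ)*(s:ℕ)))) * hatT H k i j * c2q (eC n₃ ((k:ℕ)*(t:ℕ)))
        = c2q (eC n₃ (-((k:ℕ)*(s:ℕ)))
            * (∑ u : Fin n₃, eC n₃ ((k:ℕ)*(u:ℕ)) * Td H u i j) * eC n₃ ((k:ℕ)*(t:ℕ)))
          + jH * c2q (eC n₃ ((k:ℕ)*(s:ℕ))
            * (∑ u : Fin n₃, eC n₃ (-((k:ℕ)*(u:ℕ))) * Tc H u i j)
            * eC n₃ ((k:ℕ)*(t:ℕ))) := by
    intro k
    rw [hatT_apply, mul_add, add_mul]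
    congr 1
    · rw [c2q_mul, c2q_mul]
    · rw [← mul_assoc, c2q_mul_jH, conj_eC, neg_neg, mul_assoc jH, ← c2q_mul,
        mul_assoc jH, ← c2q_mul]
  rw [Finset.sum_congr rfl (fun k _ => hterm k), Finset.sum_add_distrib,
    ← c2q_sum, ← Finset.mul_sum, ← c2q_sum]
  have hS1 : (∑ k : Fin n₃, eC n₃ (-((k:ℕ)*(s:ℕ)))
        * (∑ u : Fin n₃, eC n₃ ((k:ℕ)*(u:ℕ)) * Td H u i j) * eC n₃ ((k:ℕ)*(t:ℕ)))
      = (n₃:ℂ) * Td H (s-t) i j := by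
    have hstep : ∀ k : Fin n₃,
        eC n₃ (-((k:ℕ)*(s:ℕ)))
            * (∑ u : Fin n₃, eC n₃ ((k:ℕ)*(u:ℕ)) * Td H u i j) * eC n₃ ((k:ℕ)*(t:ℕ))
          = ∑ u : Fin n₃,
              eC n₃ ((k:ℕ) * (((u:ℕ):ℤ)+((t:ℕ):ℤ)-((s:ℕ):ℤ))) * Td H u i j := by
      intro k
      rw [Finset.mul_sum, Finset.sum_mul]
      refine Finset.sum_congr rfl fun u _ => ?_
      rw [show ((k:ℕ):ℤ) * (((u:ℕ):ℤ)+((t:ℕ):ℤ)-((s:ℕ):ℤ))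
          = -(((k:ℕ):ℤ)*((s:ℕ):ℤ)) + (((k:ℕ):ℤ)*((u:ℕ):ℤ) + ((k:ℕ):ℤ)*((t:ℕ):ℤ))
          from by ring, eC_add, eC_add]
      ring
    rw [Finset.sum_congr rfl (fun k _ => hstep k), Finset.sum_comm]
    have hinner : ∀ u : Fin n₃,
        (∑ k : Fin n₃, eC n₃ ((k:ℕ) * (((u:ℕ):ℤ)+((t:ℕ):ℤ)-((s:ℕ):ℤ))) * Td H u i j)
          = (if u = s - t then (n₃:ℂ) else 0) * Td H u i j := by
      intro u
      rw [← Finset.sum_mul, sum_eC]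
      congr 1
      have hd : (n₃:ℤ) ∣ (((u:ℕ):ℤ) - (((s-t : Fin n₃):ℕ):ℤ))
          - (((u:ℕ):ℤ)+((t:ℕ):ℤ)-((s:ℕ):ℤ)) := by
        have := (dvd_neg).mpr (fin_sub_coe s t)
        convert this using 1; rfl; ring
      have hiff : ((n₃:ℤ) ∣ ((u:ℕ):ℤ)+((t:ℕ):ℤ)-((s:ℕ):ℤ)) ↔ (u = s - t) := by
        rw [fin_eq_iff, dvd_iff_dvd hd]
      simp only [hiff]
    rw [Finset.sum_congr rfl (fun u _ => hinner u)]
    simp [ite_mul]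
  have hS2 : (∑ k : Fin n₃, eC n₃ ((k:ℕ)*(s:ℕ))
        * (∑ u : Fin n₃, eC n₃ (-((k:ℕ)*(u:ℕ))) * Tc H u i j) * eC n₃ ((k:ℕ)*(t:ℕ)))
      = (n₃:ℂ) * Tc H (s+t) i j := by
    have hstep : ∀ k : Fin n₃,
        eC n₃ ((k:ℕ)*(s:ℕ))
            * (∑ u : Fin n₃, eC n₃ (-((k:ℕ)*(u:ℕ))) * Tc H u i j) * eC n₃ ((k:ℕ)*(t:ℕ))
          = ∑ u : Fin n₃,
              eC n₃ ((k:ℕ) * (((s:ℕ):ℤ)+((t:ℕ):ℤ)-((u:ℕ):ℤ))) * Tc H u i j := by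
      intro k
      rw [Finset.mul_sum, Finset.sum_mul]
      refine Finset.sum_congr rfl fun u _ => ?_
      rw [show ((k:ℕ):ℤ) * (((s:ℕ):ℤ)+((t:ℕ):ℤ)-((u:ℕ):ℤ))
          = (((k:ℕ):ℤ)*((s:ℕ):ℤ)) + (-(((k:ℕ):ℤ)*((u:ℕ):ℤ)) + ((k:ℕ):ℤ)*((t:ℕ):ℤ))
          from by ring, eC_add, eC_add]
      ring
    rw [Finset.sum_congr rfl (fun k _ => hstep k), Finset.sum_comm]
    have hinner : ∀ u : Fin n₃,
        (∑ k : Fin n₃, eC n₃ ((k:ℕ) * (((s:ℕ):ℤ)+((t:ℕ):ℤ)-((u:ℕ):ℤ))) * Tc H u i j)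
          = (if u = s + t then (n₃:ℂ) else 0) * Tc H u i j := by
      intro u
      rw [← Finset.sum_mul, sum_eC]
      congr 1
      have hd : (n₃:ℤ) ∣ (((u:ℕ):ℤ) - (((s+t : Fin n₃):ℕ):ℤ))
          - (-(((s:ℕ):ℤ)+((t:ℕ):ℤ)-((u:ℕ):ℤ))) := by
        have := (dvd_neg).mpr (fin_add_coe s t)
        convert this using 1; rfl; ring
      have hiff : ((n₃:ℤ) ∣ ((s:ℕ):ℤ)+((t:ℕ):ℤ)-((u:ℕ):ℤ)) ↔ (u = s + t) := by
        rw [fin_eq_iff, dvd_iff_dvd hd, dvd_neg]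
      simp only [hiff]
    rw [Finset.sum_congr rfl (fun u _ => hinner u)]
    simp [ite_mul]
  rw [hS1, hS2, bcircz_apply, mul_add]
  congr 1
  · rw [natCast_c2q, ← c2q_mul]
    rfl
  · rw [← mul_assoc, (Nat.cast_commute n₃ jH).eq, mul_assoc, natCast_c2q, ← c2q_mul]
    rfl

end Aux3
section Aux4

lemma sum_swap5 {α β γ δ ε M : Type*} [Fintype α] [Fintype β] [Fintype γ] [Fintype δ]
    [Fintype ε] [AddCommMonoid M] (f : α → β → γ → δ → ε → M) :
    (∑ a, ∑ b, ∑ c, ∑ d, ∑ e, f a b c d e) = ∑ e, ∑ a, ∑ b, ∑ c, ∑ d, f a b c d e := by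
  calc (∑ a, ∑ b, ∑ c, ∑ d, ∑ e, f a b c d e)
      = ∑ a, ∑ b, ∑ c, ∑ e, ∑ d, f a b c d e := by
        refine Finset.sum_congr rfl fun a _ => Finset.sum_congr rfl fun b _ =>
          Finset.sum_congr rfl fun c _ => ?_
        exact Finset.sum_comm
    _ = ∑ a, ∑ b, ∑ e, ∑ c, ∑ d, f a b c d e := by
        refine Finset.sum_congr rfl fun a _ => Finset.sum_congr rfl fun b _ => ?_
        exact Finset.sum_comm
    _ = ∑ a, ∑ e, ∑ b, ∑ c, ∑ d, f a b c d e := by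
        refine Finset.sum_congr rfl fun a _ => ?_
        exact Finset.sum_comm
    _ = ∑ e, ∑ a, ∑ b, ∑ c, ∑ d, f a b c d e := Finset.sum_comm

lemma sum_swap4 {α β γ δ M : Type*} [Fintype α] [Fintype β] [Fintype γ] [Fintype δ]
    [AddCommMonoid M] (f : α → β → γ → δ → M) :
    (∑ b, ∑ a, ∑ d, ∑ c, f a b c d) = ∑ a, ∑ b, ∑ c, ∑ d, f a b c d := by
  rw [Finset.sum_comm]
  refine Finset.sum_congr rfl fun a _ => Finset.sum_congr rfl fun b _ => ?_
  exact Finset.sum_comm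

lemma quat_natCast_ne_zero {m : ℕ} (hm : m ≠ 0) : (m : Quat) ≠ 0 := by
  intro h0
  have := congrArg QuaternionAlgebra.re h0
  simp at this
  exact hm (by exact_mod_cast (this.trans rfl : (m:ℝ) = 0))

end Aux4
set_option maxHeartbeats 1000000 in
/-- if every frontal slice of `Ĥ` is Hermitian positive
semidefinite, then `bcirc_z(H)` is Hermitian and positive semidefinite. -/
theorem stmt18 {n n₃ : ℕ} (H : Tensor Quat n n n₃)
    (h : ∀ k : Fin n₃, (hatT H k)ᴴ = hatT H k ∧ IsPSDMat (hatT H k)) :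
    (bcircz H)ᴴ = bcircz H ∧ IsPSDMat (bcircz H) := by
  constructor
  · -- Hermitian part
    refine Matrix.ext fun p q => ?_
    obtain ⟨s, i⟩ := p
    obtain ⟨t, j⟩ := q
    rw [Matrix.conjTranspose_apply]
    have hne : (n₃ : Quat) ≠ 0 := quat_natCast_ne_zero s.pos.ne'
    apply mul_left_cancel₀ hne
    have h1 := key_bcircz H t s j i
    have h2 := key_bcircz H s t i j
    have hstar : (n₃:Quat) * star (bcircz H (t, j) (s, i))
        = star ((n₃:Quat) * bcircz H (t, j) (s, i)) := by
      rw [StarMul.star_mul, star_natCast,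
        (Nat.cast_commute n₃ (star (bcircz H (t, j) (s, i)))).eq]
    rw [hstar, h1, h2, star_sum]
    refine Finset.sum_congr rfl fun k _ => ?_
    rw [StarMul.star_mul, StarMul.star_mul, star_c2q, star_c2q, conj_eC, conj_eC, neg_neg]
    have hB : star (hatT H k j i) = hatT H k i j := by
      have hh := (h k).1
      calc star (hatT H k j i) = (hatT H k)ᴴ i j := rfl
        _ = hatT H k i j := by rw [hh]
    rw [hB, ← mul_assoc]
  · -- PSD part
    intro x
    rcases Nat.eq_zero_or_pos n₃ with hn | hn
    · refine ⟨0, le_rfl, ?_⟩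
      subst hn
      simp [dotProduct]
    · have hne : (n₃ : Quat) ≠ 0 := quat_natCast_ne_zero hn.ne'
      set y : Fin n₃ → (Fin n → Quat) :=
        fun k i' => ∑ u : Fin n₃, c2q (eC n₃ ((k:ℕ)*(u:ℕ))) * x (u, i') with hy0
      have hy : ∀ (k : Fin n₃) (i' : Fin n),
          y k i' = ∑ u : Fin n₃, c2q (eC n₃ ((k:ℕ)*(u:ℕ))) * x (u, i') := fun _ _ => rfl
      have hystar : ∀ (k : Fin n₃) (i' : Fin n),
          star (y k i') = ∑ u : Fin n₃, star (x (u, i')) * c2q (eC n₃ (-((k:ℕ)*(u:ℕ)))) := by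
        intro k i'
        rw [hy, star_sum]
        refine Finset.sum_congr rfl fun u _ => ?_
        rw [StarMul.star_mul, star_c2q, conj_eC]
      choose r hr0 hr using fun k => (h k).2 (y k)
      refine ⟨(∑ k, r k) / n₃,
        div_nonneg (Finset.sum_nonneg fun k _ => hr0 k) (by positivity), ?_⟩
      have expandR : ∀ k : Fin n₃,
          star (y k) ⬝ᵥ (hatT H k).mulVec (y k)
            = ∑ s : Fin n₃, ∑ i : Fin n, ∑ t : Fin n₃, ∑ j : Fin n,
                star (x (s,i)) * (c2q (eC n₃ (-((k:ℕ)*(s:ℕ))))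
                  * (hatT H k i j * (c2q (eC n₃ ((k:ℕ)*(t:ℕ))) * x (t,j)))) := by
        intro k
        calc star (y k) ⬝ᵥ (hatT H k).mulVec (y k)
            = ∑ i : Fin n,
                (∑ s : Fin n₃, star (x (s,i)) * c2q (eC n₃ (-((k:ℕ)*(s:ℕ)))))
                  * (∑ j : Fin n, hatT H k i j
                      * (∑ t : Fin n₃, c2q (eC n₃ ((k:ℕ)*(t:ℕ))) * x (t,j))) := by
              simp only [dotProduct, Matrix.mulVec, Pi.star_apply, hystar]; simp only [hy]
          _ = ∑ i : Fin n, ∑ s : Fin n₃, ∑ j : Fin n, ∑ t : Fin n₃,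
                star (x (s,i)) * (c2q (eC n₃ (-((k:ℕ)*(s:ℕ))))
                  * (hatT H k i j * (c2q (eC n₃ ((k:ℕ)*(t:ℕ))) * x (t,j)))) := by
              refine Finset.sum_congr rfl fun i _ => ?_
              rw [Finset.sum_mul]
              refine Finset.sum_congr rfl fun s _ => ?_
              rw [Finset.mul_sum]
              refine Finset.sum_congr rfl fun j _ => ?_
              rw [Finset.mul_sum, Finset.mul_sum]
              refine Finset.sum_congr rfl fun t _ => ?_
              simp only [mul_assoc]
          _ = ∑ s : Fin n₃, ∑ i : Fin n, ∑ t : Fin n₃, ∑ j : Fin n,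
                star (x (s,i)) * (c2q (eC n₃ (-((k:ℕ)*(s:ℕ))))
                  * (hatT H k i j * (c2q (eC n₃ ((k:ℕ)*(t:ℕ))) * x (t,j)))) :=
              sum_swap4 _
      have main : (n₃:Quat) * (star x ⬝ᵥ (bcircz H).mulVec x)
          = ∑ k : Fin n₃, star (y k) ⬝ᵥ (hatT H k).mulVec (y k) := by
        have step2 : ∀ (s : Fin n₃) (i : Fin n) (t : Fin n₃) (j : Fin n),
            (n₃:Quat) * (star (x (s,i)) * (bcircz H (s,i) (t,j) * x (t,j)))
              = ∑ k : Fin n₃,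
                  star (x (s,i)) * (c2q (eC n₃ (-((k:ℕ)*(s:ℕ))))
                    * (hatT H k i j * (c2q (eC n₃ ((k:ℕ)*(t:ℕ))) * x (t,j)))) := by
          intro s i t j
          rw [← mul_assoc, (Nat.cast_commute n₃ (star (x (s,i)))).eq, mul_assoc,
            ← mul_assoc ((n₃:ℕ):Quat), key_bcircz, Finset.sum_mul, Finset.mul_sum]
          refine Finset.sum_congr rfl fun k _ => ?_
          simp only [mul_assoc]
        calc (n₃:Quat) * (star x ⬝ᵥ (bcircz H).mulVec x)
            = ∑ s : Fin n₃, ∑ i : Fin n, ∑ t : Fin n₃, ∑ j : Fin n,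
                (n₃:Quat) * (star (x (s,i)) * (bcircz H (s,i) (t,j) * x (t,j))) := by
              simp only [dotProduct, Matrix.mulVec, Finset.mul_sum,
                Fintype.sum_prod_type, Pi.star_apply]
          _ = ∑ s : Fin n₃, ∑ i : Fin n, ∑ t : Fin n₃, ∑ j : Fin n, ∑ k : Fin n₃,
                star (x (s,i)) * (c2q (eC n₃ (-((k:ℕ)*(s:ℕ))))
                  * (hatT H k i j * (c2q (eC n₃ ((k:ℕ)*(t:ℕ))) * x (t,j)))) := by
              refine Finset.sum_congr rfl fun s _ => Finset.sum_congr rfl fun i _ =>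
                Finset.sum_congr rfl fun t _ => Finset.sum_congr rfl fun j _ => step2 s i t j
          _ = ∑ k : Fin n₃, ∑ s : Fin n₃, ∑ i : Fin n, ∑ t : Fin n₃, ∑ j : Fin n,
                star (x (s,i)) * (c2q (eC n₃ (-((k:ℕ)*(s:ℕ))))
                  * (hatT H k i j * (c2q (eC n₃ ((k:ℕ)*(t:ℕ))) * x (t,j)))) :=
              sum_swap5 _
          _ = ∑ k : Fin n₃, star (y k) ⬝ᵥ (hatT H k).mulVec (y k) :=
              Finset.sum_congr rfl fun k _ => (expandR k).symm
      calc star x ⬝ᵥ (bcircz H).mulVec x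
          = (n₃:Quat)⁻¹ * ∑ k : Fin n₃, star (y k) ⬝ᵥ (hatT H k).mulVec (y k) := by
            rw [← main, inv_mul_cancel_left₀ hne]
        _ = (n₃:Quat)⁻¹ * ((∑ k, r k : ℝ) : Quat) := by
            congr 1
            rw [Finset.sum_congr rfl fun k _ => hr k, real_c2q,
              show ((∑ k, r k : ℝ) : ℂ) = ∑ k, ((r k : ℝ) : ℂ) from by push_cast; ring,
              c2q_sum]
            exact Finset.sum_congr rfl fun k _ => (real_c2q (r k)).symm
        _ = ((((∑ k, r k) / n₃) : ℝ) : Quat) := by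
            rw [div_eq_mul_inv, Quaternion.coe_mul, Quaternion.coe_inv, Quaternion.coe_natCast]
            exact ((Quaternion.coe_commute ((∑ k, r k : ℝ)) _).eq).symm

end
end

section
/- (Right polar decomposition of quaternion matrices) For every quaternion matrix A ∈ ℍ^{n×n} there exist a unitary quaternion matrix U ∈ ℍ^{n×n} and a Hermitian positive semidefinite quaternion matrix H ∈ ℍ^{n×n} such that A = U·H. -/
open Matrix Kronecker

noncomputable section

set_option linter.unusedSectionVars false
set_option maxHeartbeats 1600000

namespace S19

open ComplexOrder


/-! ### Scalar lemmas -/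

theorem qd_add (p q : Quat) : qd (p + q) = qd p + qd q := by
  simp [qd, Complex.ext_iff]

theorem qc_add (p q : Quat) : qc (p + q) = qc p + qc q := by
  simp [qc, Complex.ext_iff]; ring

theorem qd_zero : qd 0 = 0 := by simp [qd, Complex.ext_iff, Quaternion.re_zero, Quaternion.imI_zero]

theorem qc_zero : qc 0 = 0 := by simp [qc, Complex.ext_iff, Quaternion.imJ_zero, Quaternion.imK_zero]

theorem qd_one : qd 1 = 1 := by simp [qd, Complex.ext_iff, Quaternion.re_one, Quaternion.imI_one]

theorem qc_one : qc 1 = 0 := by simp [qc, Complex.ext_iff, Quaternion.imJ_one, Quaternion.imK_one]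

theorem qd_mul (p q : Quat) :
    qd (p * q) = qd p * qd q - (starRingEnd ℂ) (qc p) * qc q := by
  simp [qd, qc, Complex.ext_iff, Quaternion.re_mul, Quaternion.imI_mul]
  constructor <;> ring

theorem qc_mul (p q : Quat) :
    qc (p * q) = qc p * qd q + (starRingEnd ℂ) (qd p) * qc q := by
  simp [qd, qc, Complex.ext_iff, Quaternion.imJ_mul, Quaternion.imK_mul]
  constructor <;> ring

theorem qd_star (p : Quat) : qd (star p) = (starRingEnd ℂ) (qd p) := by
  simp [qd, Complex.ext_iff]

theorem qc_star (p : Quat) : qc (star p) = - qc p := by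
  simp [qc, Complex.ext_iff]

theorem qd_real_smul (r : ℝ) (p : Quat) : qd (r • p) = (r : ℂ) * qd p := by
  simp [qd, Complex.ext_iff]

theorem qc_real_smul (r : ℝ) (p : Quat) : qc (r • p) = (r : ℂ) * qc p := by
  simp [qc, Complex.ext_iff]

theorem quat_ext {p q : Quat} (h1 : qd p = qd q) (h2 : qc p = qc q) : p = q := by
  simp [qd, qc, Complex.ext_iff] at h1 h2
  ext
  exacts [h1.1, h1.2, h2.1, by linarith [h2.2]]

theorem qd_triple (p v w : Quat) :
    qd (star p * v * w) =
      (starRingEnd ℂ) (qd p) * qd v * qd w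
        - (starRingEnd ℂ) (qd p) * (starRingEnd ℂ) (qc v) * qc w
        + (starRingEnd ℂ) (qc p) * qc v * qd w
        + (starRingEnd ℂ) (qc p) * (starRingEnd ℂ) (qd v) * qc w := by
  rw [qd_mul, qd_mul, qc_mul, qd_star, qc_star]
  simp only [map_add, map_neg, _root_.map_mul, Complex.conj_conj]
  ring

theorem quat_real_of_star_eq {q : Quat} (h : star q = q) : q = ((q.re : ℝ) : Quat) := by
  have h1 : q.imI = 0 := by
    have := congrArg QuaternionAlgebra.imI h; simp at this; linarith
  have h2 : q.imJ = 0 := by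
    have := congrArg QuaternionAlgebra.imJ h; simp at this; linarith
  have h3 : q.imK = 0 := by
    have := congrArg QuaternionAlgebra.imK h; simp at this; linarith
  ext <;> simp [h1, h2, h3]


/-! ### The complex representation of quaternion matrices -/

variable {l m n : Type*} [Fintype l] [Fintype m] [Fintype n]

/-- additive hom version of `qd` -/
def qdm : Quat →+ ℂ := { toFun := qd, map_zero' := qd_zero, map_add' := qd_add }

def qcm : Quat →+ ℂ := { toFun := qc, map_zero' := qc_zero, map_add' := qc_add }

theorem qd_sum {ι : Type*} (s : Finset ι) (f : ι → Quat) :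
    qd (∑ i ∈ s, f i) = ∑ i ∈ s, qd (f i) := map_sum qdm f s

theorem qc_sum {ι : Type*} (s : Finset ι) (f : ι → Quat) :
    qc (∑ i ∈ s, f i) = ∑ i ∈ s, qc (f i) := map_sum qcm f s

def Mq (A : Matrix m n Quat) : Matrix m n ℂ := fun i j => qd (A i j)
def Mc (A : Matrix m n Quat) : Matrix m n ℂ := fun i j => qc (A i j)
def cmap (M : Matrix m n ℂ) : Matrix m n ℂ := M.map (starRingEnd ℂ)

theorem cmap_apply (M : Matrix m n ℂ) (i j) : cmap M i j = (starRingEnd ℂ) (M i j) := rfl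

theorem cmap_mul (M : Matrix m l ℂ) (N : Matrix l n ℂ) : cmap (M * N) = cmap M * cmap N :=
  Matrix.map_mul

theorem cmap_cmap (M : Matrix m n ℂ) : cmap (cmap M) = M := by
  ext i j; simp [cmap]

theorem cmap_one [DecidableEq m] : cmap (1 : Matrix m m ℂ) = 1 := by
  ext i j; simp [cmap, Matrix.one_apply]

theorem cmap_neg (M : Matrix m n ℂ) : cmap (-M) = -cmap M := by
  ext i j; simp [cmap]

theorem cmap_add (M N : Matrix m n ℂ) : cmap (M + N) = cmap M + cmap N := by
  ext i j; simp [cmap]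

theorem cmap_real_smul (r : ℝ) (M : Matrix m n ℂ) : cmap ((r : ℂ) • M) = (r : ℂ) • cmap M := by
  ext i j; simp [cmap]

theorem cmap_sub (M N : Matrix m n ℂ) : cmap (M - N) = cmap M - cmap N := by
  ext i j; simp [cmap]

theorem conjTranspose_cmap (M : Matrix m n ℂ) : (cmap M)ᴴ = Mᵀ := by
  ext i j; simp [cmap]

theorem cmap_transpose (M : Matrix m n ℂ) : cmap (Mᵀ) = Mᴴ := by
  ext i j; simp [cmap]

theorem cmap_conjTranspose (M : Matrix m n ℂ) : cmap (Mᴴ) = Mᵀ := by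
  ext i j; simp [cmap]

/-- The complex representation. -/
def chi (A : Matrix m n Quat) : Matrix (m ⊕ m) (n ⊕ n) ℂ :=
  fromBlocks (Mq A) (-(cmap (Mc A))) (Mc A) (cmap (Mq A))

theorem Mq_mul (A : Matrix m l Quat) (B : Matrix l n Quat) :
    Mq (A * B) = Mq A * Mq B - cmap (Mc A) * Mc B := by
  ext i j
  simp only [Mq, Matrix.mul_apply, Matrix.sub_apply, cmap, Mc, Matrix.map_apply]
  rw [qd_sum, ← Finset.sum_sub_distrib]
  exact Finset.sum_congr rfl fun k _ => qd_mul _ _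

theorem Mc_mul (A : Matrix m l Quat) (B : Matrix l n Quat) :
    Mc (A * B) = Mc A * Mq B + cmap (Mq A) * Mc B := by
  ext i j
  simp only [Mc, Mq, Matrix.mul_apply, Matrix.add_apply, cmap, Matrix.map_apply]
  rw [qc_sum, ← Finset.sum_add_distrib]
  exact Finset.sum_congr rfl fun k _ => qc_mul _ _

theorem Mq_one [DecidableEq m] : Mq (1 : Matrix m m Quat) = 1 := by
  ext i j
  simp only [Mq, Matrix.one_apply]
  split <;> simp [qd_one, qd_zero]

theorem Mc_one [DecidableEq m] : Mc (1 : Matrix m m Quat) = 0 := by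
  ext i j
  simp only [Mc, Matrix.one_apply]
  split <;> simp [qc_one, qc_zero]

theorem Mq_conjTranspose (A : Matrix m n Quat) : Mq (Aᴴ) = (Mq A)ᴴ := by
  ext i j; simp [Mq, Matrix.conjTranspose_apply, qd_star]

theorem Mc_conjTranspose (A : Matrix m n Quat) : Mc (Aᴴ) = -(Mc A)ᵀ := by
  ext i j; simp [Mc, Matrix.conjTranspose_apply, qc_star]

theorem chi_mul [DecidableEq l] (A : Matrix m l Quat) (B : Matrix l n Quat) :
    chi (A * B) = chi A * chi B := by
  simp only [chi, Matrix.fromBlocks_multiply, Mq_mul, Mc_mul, cmap_add, cmap_sub, cmap_mul,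
    cmap_neg, cmap_cmap, Matrix.neg_mul, Matrix.mul_neg, sub_eq_add_neg]
  congr 1 <;> abel

theorem chi_one [DecidableEq m] : chi (1 : Matrix m m Quat) = 1 := by
  simp [chi, Mq_one, Mc_one, cmap_one, cmap, Matrix.fromBlocks_one]

theorem chi_add (A B : Matrix m n Quat) : chi (A + B) = chi A + chi B := by
  have hq : Mq (A + B) = Mq A + Mq B := by ext i j; exact qd_add _ _
  have hc : Mc (A + B) = Mc A + Mc B := by ext i j; exact qc_add _ _
  simp only [chi, hq, hc, cmap_add, Matrix.fromBlocks_add]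
  congr 1 <;> abel

theorem chi_conjTranspose (A : Matrix m n Quat) : chi (Aᴴ) = (chi A)ᴴ := by
  simp only [chi, Mq_conjTranspose, Mc_conjTranspose, Matrix.fromBlocks_conjTranspose,
    cmap_neg, cmap_transpose, cmap_conjTranspose, conjTranspose_cmap, Matrix.conjTranspose_neg,
    neg_neg]

theorem chi_inj {A B : Matrix m n Quat} (h : chi A = chi B) : A = B := by
  refine Matrix.ext fun i j => ?_
  have h11 := congrFun (congrFun h (Sum.inl i)) (Sum.inl j)
  have h21 := congrFun (congrFun h (Sum.inr i)) (Sum.inl j)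
  simp only [chi, fromBlocks] at h11 h21
  exact quat_ext h11 h21

theorem chi_real_smul (r : ℝ) (A : Matrix m n Quat) : chi (r • A) = (r : ℂ) • chi A := by
  have hq : Mq (r • A) = (r : ℂ) • Mq A := by ext i j; exact qd_real_smul r _
  have hc : Mc (r • A) = (r : ℂ) • Mc A := by ext i j; exact qc_real_smul r _
  simp only [chi, hq, hc, cmap_real_smul, Matrix.fromBlocks_smul, smul_neg]

/-! ### The quaternionic structure map `tau` -/

/-- The block matrix `J`. -/
def Jmat (m : Type*) [DecidableEq m] : Matrix (m ⊕ m) (m ⊕ m) ℂ :=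
  fromBlocks 0 (-1) 1 0

theorem Jmat_mul_conjTranspose [DecidableEq m] : Jmat m * (Jmat m)ᴴ = 1 := by
  simp [Jmat, Matrix.fromBlocks_conjTranspose, Matrix.fromBlocks_multiply,
    ← Matrix.fromBlocks_one]

theorem Jmat_conjTranspose_mul [DecidableEq m] : (Jmat m)ᴴ * Jmat m = 1 := by
  simp [Jmat, Matrix.fromBlocks_conjTranspose, Matrix.fromBlocks_multiply,
    ← Matrix.fromBlocks_one]

/-- The antilinear symmetry whose fixed points are exactly the image of `chi`. -/
def tau [DecidableEq m] [DecidableEq n] (M : Matrix (m ⊕ m) (n ⊕ n) ℂ) :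
    Matrix (m ⊕ m) (n ⊕ n) ℂ :=
  Jmat m * cmap M * (Jmat n)ᴴ

theorem tau_fromBlocks [DecidableEq m] [DecidableEq n]
    (A B C D : Matrix m n ℂ) :
    tau (fromBlocks A B C D) = fromBlocks (cmap D) (-(cmap C)) (-(cmap B)) (cmap A) := by
  have : cmap (fromBlocks A B C D) = fromBlocks (cmap A) (cmap B) (cmap C) (cmap D) := by
    ext i j; cases i <;> cases j <;> simp [cmap, fromBlocks]
  simp [tau, this, Jmat, Matrix.fromBlocks_conjTranspose, Matrix.fromBlocks_multiply]

theorem tau_mul [DecidableEq l] [DecidableEq m] [DecidableEq n]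
    (M : Matrix (m ⊕ m) (l ⊕ l) ℂ) (N : Matrix (l ⊕ l) (n ⊕ n) ℂ) :
    tau (M * N) = tau M * tau N := by
  simp only [tau, cmap_mul, Matrix.mul_assoc]
  rw [← Matrix.mul_assoc (Jmat l)ᴴ, Jmat_conjTranspose_mul, Matrix.one_mul]

theorem tau_one [DecidableEq m] : tau (1 : Matrix (m ⊕ m) (m ⊕ m) ℂ) = 1 := by
  simp only [tau, cmap_one, Matrix.mul_one, Jmat_mul_conjTranspose]

theorem tau_chi [DecidableEq m] [DecidableEq n] (A : Matrix m n Quat) : tau (chi A) = chi A := by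
  rw [chi, tau_fromBlocks, cmap_cmap, cmap_neg, cmap_cmap, neg_neg]

theorem exists_chi_of_tau [DecidableEq m] [DecidableEq n]
    {M : Matrix (m ⊕ m) (n ⊕ n) ℂ} (h : tau M = M) : ∃ A : Matrix m n Quat, chi A = M := by
  set M11 := M.toBlocks₁₁
  set M12 := M.toBlocks₁₂
  set M21 := M.toBlocks₂₁
  set M22 := M.toBlocks₂₂
  have hM : M = fromBlocks M11 M12 M21 M22 := (Matrix.fromBlocks_toBlocks M).symm
  rw [hM, tau_fromBlocks] at h
  have h12 : -(cmap M21) = M12 := congrArg Matrix.toBlocks₁₂ h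
  have h22 : cmap M11 = M22 := congrArg Matrix.toBlocks₂₂ h
  refine ⟨fun i j => ⟨(M11 i j).re, (M11 i j).im, (M21 i j).re, -(M21 i j).im⟩, ?_⟩
  rw [hM]; unfold chi
  have hq : Mq (fun i j => (⟨(M11 i j).re, (M11 i j).im, (M21 i j).re, -(M21 i j).im⟩ : Quat))
      = M11 := by ext i j; simp [Mq, qd]
  have hc : Mc (fun i j => (⟨(M11 i j).re, (M11 i j).im, (M21 i j).re, -(M21 i j).im⟩ : Quat))
      = M21 := by ext i j; simp [Mc, qc]
  rw [hq, hc, h12, h22]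

theorem tau_posSemidef [DecidableEq m] {M : Matrix (m ⊕ m) (m ⊕ m) ℂ}
    (hM : M.PosSemidef) : (tau M).PosSemidef := by
  have h1 : cmap M = Mᵀ := by
    conv_lhs => rw [← hM.1]
    rw [cmap_conjTranspose]
  rw [tau, h1]
  exact (hM.transpose).mul_mul_conjTranspose_same _

theorem tau_conjTranspose [DecidableEq m] [DecidableEq n] (M : Matrix (m ⊕ m) (n ⊕ n) ℂ) :
    tau (Mᴴ) = (tau M)ᴴ := by
  rw [tau, tau, cmap_conjTranspose, Matrix.conjTranspose_mul, Matrix.conjTranspose_mul,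
    Matrix.conjTranspose_conjTranspose, conjTranspose_cmap, Matrix.mul_assoc]

/-! ### Positive semidefiniteness transfer -/

theorem star_apply_eq {m : Type*} {H : Matrix m m Quat} (hH : Hᴴ = H) (i j : m) :
    star (H i j) = H j i := by
  conv_rhs => rw [← hH]
  rfl

theorem isPSD_of_chi_psd {m : Type*} [Fintype m] [DecidableEq m] {H : Matrix m m Quat}
    (hH : Hᴴ = H) (hS : (chi H).PosSemidef) : IsPSDMat H := by
  intro x
  set q := star x ⬝ᵥ H.mulVec x with hqdef
  have hq' : q = ∑ i, ∑ j, star (x i) * H i j * x j := by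
    simp [hqdef, dotProduct, Matrix.mulVec, Finset.mul_sum, mul_assoc]
  have hstar : star q = q := by
    rw [hq', star_sum]
    rw [Finset.sum_comm]
    refine Finset.sum_congr rfl fun i _ => ?_
    rw [star_sum]
    refine Finset.sum_congr rfl fun j _ => ?_
    simp only [StarMul.star_mul, star_star, star_apply_eq hH, mul_assoc]
  set y : (m ⊕ m) → ℂ := Sum.elim (fun i => qd (x i)) (fun i => qc (x i)) with hy
  have key : qd q = star y ⬝ᵥ ((chi H) *ᵥ y) := by
    rw [hq', qd_sum]
    simp only [qd_sum, qd_triple]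
    simp only [dotProduct, Matrix.mulVec, dotProduct, Fintype.sum_sum_type, Sum.elim_inl,
      Sum.elim_inr, Pi.star_apply, chi, Matrix.fromBlocks_apply₁₁, Matrix.fromBlocks_apply₁₂,
      Matrix.fromBlocks_apply₂₁, Matrix.fromBlocks_apply₂₂, Matrix.neg_apply, cmap_apply,
      Mq, Mc, Complex.star_def, hy]
    simp only [Finset.mul_sum, ← Finset.sum_add_distrib, ← Finset.sum_sub_distrib]
    refine Finset.sum_congr rfl fun i _ => Finset.sum_congr rfl fun j _ => ?_
    ring
  refine ⟨q.re, ?_, ?_⟩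
  · have h0 := hS.dotProduct_mulVec_nonneg y
    rw [← key] at h0
    have : (0:ℂ).re ≤ (qd q).re := (Complex.le_def.mp h0).1
    simpa [qd] using this
  · rw [hqdef] at hq' ⊢
    exact quat_real_of_star_eq hstar

/-! ### Polar decomposition for invertible quaternion matrices -/

open scoped MatrixOrder in
theorem polar_of_invertible {m : Type*} [Fintype m] [DecidableEq m]
    (A C : Matrix m m Quat) (hAC : A * C = 1) (hCA : C * A = 1) :
    ∃ U H : Matrix m m Quat,
      (U * Uᴴ = 1 ∧ Uᴴ * U = 1) ∧ Hᴴ = H ∧ IsPSDMat H ∧ A = U * H := by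
  set N := chi A with hN
  have hK : ((chi A)ᴴ * chi A).PosSemidef := Matrix.posSemidef_conjTranspose_mul_self (chi A)
  set S := CFC.sqrt ((chi A)ᴴ * chi A) with hSdef
  have hSpsd : S.PosSemidef := Matrix.nonneg_iff_posSemidef.mp (CFC.sqrt_nonneg _)
  have htauK : tau ((chi A)ᴴ * chi A) = (chi A)ᴴ * chi A := by
    rw [tau_mul, tau_conjTranspose, tau_chi]
  have htauS : tau S = S := by
    have h1 : (tau S).PosSemidef := tau_posSemidef hSpsd
    have h2 : (tau S) ^ 2 = (chi A)ᴴ * chi A := by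
      rw [sq, ← tau_mul, ← sq, CFC.sq_sqrt _ hK.nonneg, htauK]
    exact (CFC.sqrt_unique (by rw [← sq]; exact h2) h1.nonneg).symm
  obtain ⟨H, hHS⟩ := exists_chi_of_tau htauS
  have hHerm : Hᴴ = H := by
    apply chi_inj
    rw [chi_conjTranspose, hHS]
    exact hSpsd.1
  have hPSD : IsPSDMat H := isPSD_of_chi_psd hHerm (hHS ▸ hSpsd)
  have hNC : chi A * chi C = 1 := by rw [← chi_mul, hAC, chi_one]
  have hCN : chi C * chi A = 1 := by rw [← chi_mul, hCA, chi_one]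
  have hKright : ((chi A)ᴴ * chi A) * (chi C * (chi C)ᴴ) = 1 := by
    have h1 : ((chi A)ᴴ * chi A) * (chi C * (chi C)ᴴ)
        = (chi A)ᴴ * ((chi A * chi C) * (chi C)ᴴ) := by simp [Matrix.mul_assoc]
    rw [h1, hNC, Matrix.one_mul, ← Matrix.conjTranspose_mul, hCN, Matrix.conjTranspose_one]
  have hdetK : IsUnit ((chi A)ᴴ * chi A).det := Matrix.isUnit_det_of_right_inverse hKright
  have hdetS : IsUnit S.det := by
    have h2 : S.det * S.det = ((chi A)ᴴ * chi A).det := by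
      rw [← Matrix.det_mul, CFC.sqrt_mul_sqrt_self _ hK.nonneg]
    exact isUnit_of_mul_isUnit_left (h2 ▸ hdetK)
  have hSV : S * S⁻¹ = 1 := Matrix.mul_nonsing_inv _ hdetS
  have hVS : S⁻¹ * S = 1 := Matrix.nonsing_inv_mul _ hdetS
  have htauV : tau S⁻¹ = S⁻¹ := by
    have h1 : tau S * tau S⁻¹ = 1 := by rw [← tau_mul, hSV, tau_one]
    rw [htauS] at h1
    calc tau S⁻¹ = (S⁻¹ * S) * tau S⁻¹ := by rw [hVS, Matrix.one_mul]
      _ = S⁻¹ * (S * tau S⁻¹) := by rw [Matrix.mul_assoc]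
      _ = S⁻¹ := by rw [h1, Matrix.mul_one]
  obtain ⟨B, hB⟩ := exists_chi_of_tau htauV
  have hHB : H * B = 1 := chi_inj (by rw [chi_mul, chi_one, hHS, hB, hSV])
  have hBH : B * H = 1 := chi_inj (by rw [chi_mul, chi_one, hHS, hB, hVS])
  have hBstar : Bᴴ = B := by
    have h1 : Bᴴ * H = 1 := by
      rw [← hHerm, ← Matrix.conjTranspose_mul, hHB, Matrix.conjTranspose_one]
    calc Bᴴ = Bᴴ * (H * B) := by rw [hHB, Matrix.mul_one]
      _ = (Bᴴ * H) * B := by rw [Matrix.mul_assoc]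
      _ = B := by rw [h1, Matrix.one_mul]
  have hAA : Aᴴ * A = H * H :=
    chi_inj (by rw [chi_mul, chi_mul, chi_conjTranspose, hHS, CFC.sqrt_mul_sqrt_self _ hK.nonneg])
  have hUU : (A * B)ᴴ * (A * B) = 1 := by
    have h1 : (A * B)ᴴ * (A * B) = B * ((Aᴴ * A) * B) := by
      rw [Matrix.conjTranspose_mul, hBstar]; simp [Matrix.mul_assoc]
    rw [h1, hAA]
    calc B * ((H * H) * B) = (B * H) * (H * B) := by simp [Matrix.mul_assoc]
      _ = 1 := by rw [hBH, hHB, Matrix.one_mul]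
  have hUW : (A * B) * (H * C) = 1 := by
    have h1 : (A * B) * (H * C) = A * ((B * H) * C) := by simp [Matrix.mul_assoc]
    rw [h1, hBH, Matrix.one_mul, hAC]
  have hUconj : (A * B)ᴴ = H * C := by
    calc (A * B)ᴴ = (A * B)ᴴ * ((A * B) * (H * C)) := by rw [hUW, Matrix.mul_one]
      _ = ((A * B)ᴴ * (A * B)) * (H * C) := by simp [Matrix.mul_assoc]
      _ = H * C := by rw [hUU, Matrix.one_mul]
  refine ⟨A * B, H, ⟨?_, hUU⟩, hHerm, hPSD, ?_⟩
  · rw [hUconj, hUW]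
  · rw [Matrix.mul_assoc, hBH, Matrix.mul_one]

/-! ### Density of invertible matrices -/

theorem exists_inverse_of_det {m : Type*} [Fintype m] [DecidableEq m]
    {A : Matrix m m Quat} (h : IsUnit (chi A).det) :
    ∃ C, A * C = 1 ∧ C * A = 1 := by
  have h1 : chi A * (chi A)⁻¹ = 1 := Matrix.mul_nonsing_inv _ h
  have h2 : (chi A)⁻¹ * chi A = 1 := Matrix.nonsing_inv_mul _ h
  have htau : tau (chi A)⁻¹ = (chi A)⁻¹ := by
    have h3 : tau (chi A) * tau (chi A)⁻¹ = 1 := by rw [← tau_mul, h1, tau_one]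
    rw [tau_chi] at h3
    calc tau (chi A)⁻¹ = ((chi A)⁻¹ * chi A) * tau (chi A)⁻¹ := by rw [h2, Matrix.one_mul]
      _ = (chi A)⁻¹ * (chi A * tau (chi A)⁻¹) := by rw [Matrix.mul_assoc]
      _ = (chi A)⁻¹ := by rw [h3, Matrix.mul_one]
  obtain ⟨C, hC⟩ := exists_chi_of_tau htau
  exact ⟨C, chi_inj (by rw [chi_mul, chi_one, hC, h1]),
    chi_inj (by rw [chi_mul, chi_one, hC, h2])⟩

theorem det_perturb {m : Type*} [Fintype m] [DecidableEq m]
    (A : Matrix m m Quat) (t : ℝ) :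
    ((-(chi A)).charpoly).eval (t : ℂ) = (chi (A + t • 1)).det := by
  rw [chi_add, chi_real_smul, chi_one]
  rw [Matrix.charpoly]
  rw [show Polynomial.eval ((t:ℂ)) (-chi A).charmatrix.det
      = (Polynomial.evalRingHom (t:ℂ)) (-chi A).charmatrix.det from rfl, RingHom.map_det]
  congr 1
  ext i j
  by_cases hij : i = j
  · subst hij
    simp [Matrix.charmatrix_apply_eq, Matrix.one_apply, Matrix.add_apply, Matrix.smul_apply]
    ring
  · simp [Matrix.charmatrix_apply_ne _ _ _ hij, Matrix.one_apply_ne hij, Matrix.add_apply,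
      Matrix.smul_apply]

theorem exists_eps {m : Type*} [Fintype m] [DecidableEq m]
    (A : Matrix m m Quat) (k : ℕ) :
    ∃ ε : ℝ, 0 < ε ∧ ε < 1 / ((k : ℝ) + 1) ∧ IsUnit (chi (A + ε • 1)).det := by
  have hp : (-(chi A)).charpoly ≠ 0 := ((-(chi A)).charpoly_monic).ne_zero
  have hroots : {z : ℂ | ((-(chi A)).charpoly).IsRoot z}.Finite := Polynomial.finite_setOf_isRoot hp
  have hbad : {t : ℝ | ((-(chi A)).charpoly).eval (t : ℂ) = 0}.Finite := by
    have : {t : ℝ | ((-(chi A)).charpoly).eval (t : ℂ) = 0}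
        = (fun t : ℝ => (t : ℂ)) ⁻¹' {z : ℂ | ((-(chi A)).charpoly).IsRoot z} := rfl
    rw [this]
    exact Set.Finite.preimage (Complex.ofReal_injective.injOn) hroots
  have hIoo : (Set.Ioo (0:ℝ) (1 / ((k : ℝ) + 1))).Infinite := by
    apply Set.Ioo_infinite
    positivity
  obtain ⟨ε, hε⟩ := (hIoo.diff hbad).nonempty
  obtain ⟨⟨hε1, hε2⟩, hε3⟩ := hε
  refine ⟨ε, hε1, hε2, ?_⟩
  rw [isUnit_iff_ne_zero, ← det_perturb]
  exact fun hc => hε3 hc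

/-! ### Compactness of the unitary group -/

def reHom : Quat →+ ℝ where
  toFun := QuaternionAlgebra.re
  map_zero' := rfl
  map_add' := fun _ _ => rfl

theorem unitary_isCompact (n : ℕ) :
    IsCompact {U : Matrix (Fin n) (Fin n) Quat | U * Uᴴ = 1 ∧ Uᴴ * U = 1} := by
  have hK : IsCompact {M : Matrix (Fin n) (Fin n) Quat | ∀ i j, ‖M i j‖ ≤ 1} := by
    have h1 : IsCompact (Set.pi Set.univ fun _ : Fin n =>
        (Set.pi Set.univ fun _ : Fin n => Metric.closedBall (0 : Quat) 1)) :=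
      isCompact_univ_pi fun _ => isCompact_univ_pi fun _ => isCompact_closedBall _ _
    suffices hs : {M : Matrix (Fin n) (Fin n) Quat | ∀ i j, ‖M i j‖ ≤ 1} = Set.pi Set.univ (fun _ : Fin n => Set.pi Set.univ fun _ : Fin n => Metric.closedBall (0 : Quat) 1) by rw [hs]; exact h1
    ext M
    refine ⟨fun hM => Set.mem_univ_pi.mpr fun i => Set.mem_univ_pi.mpr fun j => ?_,
      fun hM i j => ?_⟩
    · simpa [mem_closedBall_zero_iff] using hM i j
    · have h2 := Set.mem_univ_pi.mp (Set.mem_univ_pi.mp hM i) j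
      simpa [mem_closedBall_zero_iff] using h2
  have hclosed : IsClosed {U : Matrix (Fin n) (Fin n) Quat | U * Uᴴ = 1 ∧ Uᴴ * U = 1} := by
    have c1 : IsClosed {U : Matrix (Fin n) (Fin n) Quat | U * Uᴴ = 1} :=
      isClosed_eq (continuous_id.matrix_mul continuous_id.matrix_conjTranspose) continuous_const
    have c2 : IsClosed {U : Matrix (Fin n) (Fin n) Quat | Uᴴ * U = 1} :=
      isClosed_eq (continuous_id.matrix_conjTranspose.matrix_mul continuous_id) continuous_const
    exact c1.inter c2
  refine IsCompact.of_isClosed_subset hK hclosed ?_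
  rintro U ⟨hU1, _⟩
  intro i j
  have h := congrFun (congrFun hU1 i) i
  have hsum : ∑ k, Quaternion.normSq (U i k) = 1 := by
    have h' := congrArg QuaternionAlgebra.re h
    simp only [Matrix.mul_apply, Matrix.conjTranspose_apply, Matrix.one_apply_eq] at h'
    rw [show (∑ k, U i k * star (U i k)).re = ∑ k, (U i k * star (U i k)).re
        from map_sum reHom _ _] at h'
    simpa only [Quaternion.self_mul_star, Quaternion.re_coe, Quaternion.re_one] using h'
  have hone : Quaternion.normSq (U i j) ≤ 1 := by
    rw [← hsum]
    exact Finset.single_le_sum (f := fun k => Quaternion.normSq (U i k))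
      (fun k _ => Quaternion.normSq_nonneg) (Finset.mem_univ j)
  show ‖U i j‖ ≤ 1
  nlinarith [Quaternion.normSq_eq_norm_mul_self (U i j), norm_nonneg (U i j)]

/-! ### The main theorem -/

theorem main {n : ℕ} (A : Matrix (Fin n) (Fin n) Quat) :
    ∃ U H : Matrix (Fin n) (Fin n) Quat,
      (U * Uᴴ = 1 ∧ Uᴴ * U = 1) ∧ Hᴴ = H ∧ IsPSDMat H ∧ A = U * H := by
  classical
  choose ε hε1 hε2 hε3 using exists_eps A
  have hεlim : Filter.Tendsto ε Filter.atTop (nhds 0) := by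
    apply squeeze_zero (fun k => (hε1 k).le) (fun k => (hε2 k).le)
    exact tendsto_one_div_add_atTop_nhds_zero_nat
  set Aseq : ℕ → Matrix (Fin n) (Fin n) Quat := fun k => A + ε k • 1 with hAseq
  have hAlim : Filter.Tendsto Aseq Filter.atTop (nhds A) := by
    have hc : Continuous fun t : ℝ => A + t • (1 : Matrix (Fin n) (Fin n) Quat) :=
      continuous_const.add (continuous_id.smul continuous_const)
    have h2 := (hc.tendsto 0).comp hεlim
    simpa [Function.comp_def, hAseq] using h2
  have hpolar : ∀ k, ∃ U H : Matrix (Fin n) (Fin n) Quat,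
      (U * Uᴴ = 1 ∧ Uᴴ * U = 1) ∧ Hᴴ = H ∧ IsPSDMat H ∧ Aseq k = U * H := by
    intro k
    obtain ⟨C, hC1, hC2⟩ := exists_inverse_of_det (hε3 k)
    exact polar_of_invertible _ C hC1 hC2
  choose Us Hs hUs hHherm hHpsd hUH using hpolar
  haveI : FirstCountableTopology (Matrix (Fin n) (Fin n) Quat) :=
    inferInstanceAs (FirstCountableTopology (Fin n → Fin n → Quat))
  obtain ⟨U, hUmem, φ, hφ, hUlim⟩ :=
    (unitary_isCompact n).tendsto_subseq (x := Us) (fun k => hUs k)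
  have hAφ : Filter.Tendsto (Aseq ∘ φ) Filter.atTop (nhds A) :=
    hAlim.comp hφ.tendsto_atTop
  have hHeq : ∀ k, Hs k = (Us k)ᴴ * Aseq k := by
    intro k
    rw [hUH k, ← Matrix.mul_assoc, (hUs k).2, Matrix.one_mul]
  set H := Uᴴ * A with hHdef
  have hHlim : Filter.Tendsto (fun k => Hs (φ k)) Filter.atTop (nhds H) := by
    have cont2 : Continuous fun p : Matrix (Fin n) (Fin n) Quat × Matrix (Fin n) (Fin n) Quat
        => p.1ᴴ * p.2 := (continuous_fst.matrix_conjTranspose).matrix_mul continuous_snd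
    have h3 := (cont2.tendsto (U, A)).comp (hUlim.prodMk_nhds hAφ)
    simp only [Function.comp] at h3 ⊢
    convert h3 using 2 with k
    · exact hHeq (φ k)
  have hHermH : Hᴴ = H := by
    have h4 : Filter.Tendsto (fun k => (Hs (φ k))ᴴ) Filter.atTop (nhds Hᴴ) :=
      (continuous_id.matrix_conjTranspose.tendsto H).comp hHlim
    simp only [fun k => hHherm (φ k)] at h4
    exact tendsto_nhds_unique h4 hHlim
  have hPSDH : IsPSDMat H := by
    intro x
    set f : Matrix (Fin n) (Fin n) Quat → Quat := fun M => star x ⬝ᵥ M.mulVec x with hf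
    have hfc : Continuous f := by
      have hfeq : f = fun M => ∑ i, star (x i) * ∑ j, M i j * x j := by
        funext M
        simp [hf, dotProduct, Matrix.mulVec]
      rw [hfeq]
      apply continuous_finset_sum
      intro i _
      apply Continuous.mul continuous_const
      apply continuous_finset_sum
      intro j _
      exact (continuous_id.matrix_elem i j).mul continuous_const
    have hfH : Filter.Tendsto (fun k => f (Hs (φ k))) Filter.atTop (nhds (f H)) :=
      (hfc.tendsto H).comp hHlim
    choose r hr0 hr using fun k => hHpsd (φ k) x
    have hfr : ∀ k, f (Hs (φ k)) = ((r k : ℝ) : Quat) := fun k => hr k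
    refine ⟨(f H).re, ?_, ?_⟩
    · have h5 : Filter.Tendsto (fun k => (f (Hs (φ k))).re) Filter.atTop (nhds (f H).re) :=
        (Quaternion.continuous_re.tendsto _).comp hfH
      simp only [hfr, Quaternion.re_coe] at h5
      exact ge_of_tendsto' h5 hr0
    · have hI : (f H).imI = 0 := by
        have h5 : Filter.Tendsto (fun k => (f (Hs (φ k))).imI) Filter.atTop (nhds (f H).imI) :=
          (Quaternion.continuous_imI.tendsto _).comp hfH
        simp only [hfr, Quaternion.imI_coe] at h5
        exact tendsto_nhds_unique h5 tendsto_const_nhds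
      have hJ : (f H).imJ = 0 := by
        have h5 : Filter.Tendsto (fun k => (f (Hs (φ k))).imJ) Filter.atTop (nhds (f H).imJ) :=
          (Quaternion.continuous_imJ.tendsto _).comp hfH
        simp only [hfr, Quaternion.imJ_coe] at h5
        exact tendsto_nhds_unique h5 tendsto_const_nhds
      have hK : (f H).imK = 0 := by
        have h5 : Filter.Tendsto (fun k => (f (Hs (φ k))).imK) Filter.atTop (nhds (f H).imK) :=
          (Quaternion.continuous_imK.tendsto _).comp hfH
        simp only [hfr, Quaternion.imK_coe] at h5
        exact tendsto_nhds_unique h5 tendsto_const_nhds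
      show f H = _
      ext <;> simp [hI, hJ, hK]
  refine ⟨U, H, hUmem, hHermH, hPSDH, ?_⟩
  rw [hHdef, ← Matrix.mul_assoc, hUmem.1, Matrix.one_mul]


end S19

/-- right polar decomposition of quaternion matrices:
every `A ∈ ℍ^{n×n}` factors as `A = U·H` with `U` unitary and `H` Hermitian
positive semidefinite. -/
theorem stmt19 {n : ℕ} (A : Matrix (Fin n) (Fin n) Quat) :
    ∃ U H : Matrix (Fin n) (Fin n) Quat,
      (U * Uᴴ = 1 ∧ Uᴴ * U = 1) ∧ Hᴴ = H ∧ IsPSDMat H ∧ A = U * H := S19.main A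

end
end
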